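/- arXiv:2604.01813 — 6 statements merged into one kernel-verified Lean document; each statement's English description precedes it below -/
import Mathlib

section
/- Let D be a bounded open ball in ℝ^N, let Ω_n (n ∈ ℕ) and Ω be nonempty open subsets of D, and suppose Ω_n →H Ω. Then for every x in the topological boundary ∂Ω, the distance dist(x, ∂Ω_n) tends to 0 as n → ∞. -/
open Metric Filter Topology

/-- A preconnected set meeting both a set and its complement meets its frontier. -/
lemma aux_inter_frontier_nonempty {X : Type*} [TopologicalSpace X] {c s : Set X}
    (hc : IsPreconnected c) (h1 : (c ∩ s).Nonempty) (h2 : (c \ s).Nonempty) :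
    (c ∩ frontier s).Nonempty := by
  by_contra h
  rw [Set.not_nonempty_iff_eq_empty] at h
  have hsub : c ⊆ interior s ∪ (closure s)ᶜ := by
    intro z hz
    by_cases hz1 : z ∈ closure s
    · left
      by_contra hz2
      exact (Set.eq_empty_iff_forall_notMem.mp h z) ⟨hz, hz1, hz2⟩
    · right; exact hz1
  obtain ⟨a, hac, has⟩ := h1
  obtain ⟨b, hbc, hbs⟩ := h2
  have ha' : a ∈ interior s := by
    rcases hsub hac with h' | h'
    · exact h'
    · exact absurd (subset_closure has) h'
  have hb' : b ∈ (closure s)ᶜ := by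
    rcases hsub hbc with h' | h'
    · exact absurd (interior_subset h') hbs
    · exact h'
  obtain ⟨w, -, hw1, hw2⟩ := hc (interior s) (closure s)ᶜ isOpen_interior
    isClosed_closure.isOpen_compl hsub ⟨a, hac, ha'⟩ ⟨b, hbc, hb'⟩
  exact hw2 (subset_closure (interior_subset hw1))

/-- Hausdorff convergence of open subsets of a ball `D`:
the compact sets `cl(D) \ Ωₙ` converge to `cl(D) \ Ω` in Hausdorff distance. -/
def HConv {N : ℕ} (D : Set (EuclideanSpace ℝ (Fin N)))
    (Ω : ℕ → Set (EuclideanSpace ℝ (Fin N))) (Ωl : Set (EuclideanSpace ℝ (Fin N))) : Prop :=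
  Tendsto (fun n => hausdorffDist (closure D \ Ω n) (closure D \ Ωl)) atTop (nhds 0)

/-- Proposition 2.15 (2): if `Ωₙ →H Ω`, then for every `x ∈ ∂Ω` one has
`dist(x, ∂Ωₙ) → 0`. -/
theorem stmt_4 {N : ℕ} (x₀ : EuclideanSpace ℝ (Fin N)) (R : ℝ) (hR : 0 < R)
    (D : Set (EuclideanSpace ℝ (Fin N))) (hD : D = ball x₀ R)
    (Ω : ℕ → Set (EuclideanSpace ℝ (Fin N))) (Ωl : Set (EuclideanSpace ℝ (Fin N)))
    (hopen : ∀ n, IsOpen (Ω n)) (hsub : ∀ n, Ω n ⊆ D) (hne : ∀ n, (Ω n).Nonempty)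
    (hlopen : IsOpen Ωl) (hlsub : Ωl ⊆ D) (hlne : Ωl.Nonempty)
    (hH : HConv D Ω Ωl) :
    ∀ x ∈ frontier Ωl,
      Tendsto (fun n => infDist x (frontier (Ω n))) atTop (nhds 0) := by
  intro x hx
  have hclD : closure D = closedBall x₀ R := by
    rw [hD, closure_ball x₀ hR.ne']
  -- basic facts about x
  have hxcl : x ∈ closure Ωl := frontier_subset_closure hx
  have hxnmem : x ∉ Ωl := by
    rw [hlopen.frontier_eq] at hx; exact hx.2
  have hxKl : x ∈ closure D \ Ωl := ⟨closure_mono hlsub hxcl, hxnmem⟩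
  -- nonemptiness of the complements
  have hKn_ne : ∀ n, (closure D \ Ω n).Nonempty := by
    intro n
    by_cases hnt : Nontrivial (EuclideanSpace ℝ (Fin N))
    · obtain ⟨p, hp⟩ := NormedSpace.sphere_nonempty (x := x₀).mpr hR.le
      refine ⟨p, ?_, fun hmem => ?_⟩
      · rw [hclD]; exact sphere_subset_closedBall hp
      · have := hsub n hmem
        rw [hD, mem_ball] at this
        rw [mem_sphere] at hp
        exact absurd this (by rw [hp]; exact lt_irrefl R)
    · haveI := not_nontrivial_iff_subsingleton.mp hnt
      obtain ⟨y, hy⟩ := hlne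
      exact absurd (Subsingleton.elim x y ▸ hy) hxnmem
  have hbdd : ∀ s : Set (EuclideanSpace ℝ (Fin N)), s ⊆ closure D → Bornology.IsBounded s :=
    fun s hs => (isBounded_closedBall (x := x₀) (r := R)).subset (hclD ▸ hs)
  have hfin : ∀ n, EMetric.hausdorffEdist (closure D \ Ω n) (closure D \ Ωl) ≠ ⊤ :=
    fun n => hausdorffEdist_ne_top_of_nonempty_of_bounded (hKn_ne n) ⟨x, hxKl⟩
      (hbdd _ Set.diff_subset) (hbdd _ Set.diff_subset)
  -- main estimate
  rw [Metric.tendsto_atTop]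
  intro ε hε
  -- pick y ∈ Ωl close to x, with a ball around it inside Ωl
  obtain ⟨y, hyΩ, hxy⟩ := Metric.mem_closure_iff.mp hxcl (ε / 4) (by linarith)
  obtain ⟨r, hr, hball⟩ := Metric.isOpen_iff.mp hlopen y hyΩ
  -- from Hausdorff convergence, get n₀
  have hδ : (0:ℝ) < min (r / 2) (ε / 4) := lt_min (by linarith) (by linarith)
  obtain ⟨n₀, hn₀⟩ := (Metric.tendsto_atTop.mp hH) _ hδ
  refine ⟨n₀, fun n hn => ?_⟩
  have hdn : hausdorffDist (closure D \ Ω n) (closure D \ Ωl) < min (r / 2) (ε / 4) := by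
    have := hn₀ n hn
    rwa [Real.dist_eq, sub_zero, abs_of_nonneg hausdorffDist_nonneg] at this
  -- z ∈ closure D \ Ω n close to x
  have hdn' : hausdorffDist (closure D \ Ωl) (closure D \ Ω n) < ε / 4 := by
    rw [hausdorffDist_comm]; exact lt_of_lt_of_le hdn (min_le_right _ _)
  obtain ⟨z, hz, hxz⟩ := exists_dist_lt_of_hausdorffDist_lt hxKl hdn'
    (by rw [EMetric.hausdorffEdist_comm]; exact hfin n)
  -- y ∈ Ω n
  have hyΩn : y ∈ Ω n := by
    by_contra hyn
    have hyKn : y ∈ closure D \ Ω n := ⟨subset_closure (hlsub hyΩ), hyn⟩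
    obtain ⟨w, hw, hyw⟩ := exists_dist_lt_of_hausdorffDist_lt hyKn
      (lt_of_lt_of_le hdn (min_le_left _ _)) (hfin n)
    have : w ∈ ball y r := by
      rw [mem_ball, dist_comm]
      linarith
    exact hw.2 (hball this)
  -- the segment from y to z crosses the frontier of Ω n
  have hseg : (segment ℝ y z ∩ frontier (Ω n)).Nonempty := by
    refine aux_inter_frontier_nonempty (convex_segment y z).isPreconnected
      ⟨y, left_mem_segment ℝ y z, hyΩn⟩ ⟨z, right_mem_segment ℝ y z, hz.2⟩
  obtain ⟨w, hws, hwf⟩ := hseg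
  -- estimate dist x w
  have hxw : dist x w ≤ ε / 2 := by
    have hsub2 : segment ℝ y z ⊆ closedBall x (ε / 2) := by
      apply (convex_closedBall x (ε / 2)).segment_subset
      · rw [mem_closedBall, dist_comm]; linarith
      · rw [mem_closedBall, dist_comm]
        have : dist x z < ε / 4 := hxz
        linarith
    have := hsub2 hws
    rw [mem_closedBall] at this; rwa [dist_comm]
  have hinf : infDist x (frontier (Ω n)) ≤ ε / 2 :=
    le_trans (infDist_le_dist_of_mem hwf) hxw
  rw [Real.dist_eq, sub_zero, abs_of_nonneg infDist_nonneg]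
  linarith
end

section
/- Let D be a bounded open ball in ℝ^N, let Ω_n (n ∈ ℕ) and Ω be open subsets of D, and suppose Ω_n converges to Ω in the sense of compact sets. If the topological boundary ∂Ω has Lebesgue measure zero, then the characteristic functions χ_{Ω_n} converge to χ_Ω in L^1(D), i.e. ∫_D |χ_{Ω_n} − χ_Ω| dx → 0 as n → ∞. -/
open Metric Filter Topology MeasureTheory

/-- Convergence in the sense of compact sets. -/
def KConv {N : ℕ} (Ω : ℕ → Set (EuclideanSpace ℝ (Fin N)))
    (Ωl : Set (EuclideanSpace ℝ (Fin N))) : Prop :=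
  (∀ K : Set (EuclideanSpace ℝ (Fin N)), IsCompact K → K ⊆ Ωl →
      ∃ N₀ : ℕ, ∀ n ≥ N₀, K ⊆ Ω n) ∧
  (∀ L : Set (EuclideanSpace ℝ (Fin N)), IsCompact L → L ⊆ (closure Ωl)ᶜ →
      ∃ N₀ : ℕ, ∀ n ≥ N₀, L ⊆ (closure (Ω n))ᶜ)

/-- Proposition 2.18: if `Ωₙ` converges to `Ω` in the sense of compact sets and `∂Ω` has
Lebesgue measure zero, then the characteristic functions converge in `L¹(D)`. -/
theorem stmt_5 {N : ℕ} (x₀ : EuclideanSpace ℝ (Fin N)) (R : ℝ) (hR : 0 < R)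
    (D : Set (EuclideanSpace ℝ (Fin N))) (hD : D = ball x₀ R)
    (Ω : ℕ → Set (EuclideanSpace ℝ (Fin N))) (Ωl : Set (EuclideanSpace ℝ (Fin N)))
    (hopen : ∀ n, IsOpen (Ω n)) (hsub : ∀ n, Ω n ⊆ D)
    (hlopen : IsOpen Ωl) (hlsub : Ωl ⊆ D)
    (hK : KConv Ω Ωl)
    (hfront : volume (frontier Ωl) = 0) :
    Tendsto
      (fun n => ∫ x in D, |Set.indicator (Ω n) (fun _ => (1 : ℝ)) x -
        Set.indicator Ωl (fun _ => (1 : ℝ)) x|)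
      atTop (nhds 0) := by
  have hDmeas : MeasurableSet D := by rw [hD]; exact measurableSet_ball
  have hDfin : volume D < ⊤ := by
    rw [hD]; exact measure_ball_lt_top
  have : IsFiniteMeasure (volume.restrict D) :=
    ⟨by rwa [Measure.restrict_apply_univ]⟩
  -- pointwise a.e. convergence
  have hptwise : ∀ᵐ x ∂(volume.restrict D),
      Tendsto (fun n => |Set.indicator (Ω n) (fun _ => (1 : ℝ)) x -
        Set.indicator Ωl (fun _ => (1 : ℝ)) x|) atTop (nhds 0) := by
    have h0 : ∀ᵐ x ∂(volume : Measure (EuclideanSpace ℝ (Fin N))),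
        x ∉ frontier Ωl := by
      rw [ae_iff]
      simpa using hfront
    refine ae_restrict_of_ae (h0.mono fun x hx => ?_)
    have : x ∈ Ωl ∨ x ∈ (closure Ωl)ᶜ := by
      by_contra h
      push_neg at h
      exact hx ⟨not_not.mp h.2, fun hi => h.1 (hlopen.interior_eq ▸ hi)⟩
    rcases this with hx' | hx'
    · obtain ⟨N₀, hN₀⟩ := hK.1 {x} isCompact_singleton (Set.singleton_subset_iff.mpr hx')
      have : ∀ n ≥ N₀, |Set.indicator (Ω n) (fun _ => (1 : ℝ)) x -
          Set.indicator Ωl (fun _ => (1 : ℝ)) x| = 0 := by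
        intro n hn
        rw [Set.indicator_of_mem (hN₀ n hn rfl), Set.indicator_of_mem hx']
        simp
      exact tendsto_atTop_of_eventually_const this
    · obtain ⟨N₀, hN₀⟩ := hK.2 {x} isCompact_singleton (Set.singleton_subset_iff.mpr hx')
      have : ∀ n ≥ N₀, |Set.indicator (Ω n) (fun _ => (1 : ℝ)) x -
          Set.indicator Ωl (fun _ => (1 : ℝ)) x| = 0 := by
        intro n hn
        have h1 : x ∉ Ω n := fun h => hN₀ n hn rfl (subset_closure h)
        have h2 : x ∉ Ωl := fun h => hx' (subset_closure h)
        rw [Set.indicator_of_notMem h1, Set.indicator_of_notMem h2]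
        simp
      exact tendsto_atTop_of_eventually_const this
  have key := MeasureTheory.tendsto_integral_of_dominated_convergence
    (μ := volume.restrict D)
    (F := fun n x => |Set.indicator (Ω n) (fun _ => (1 : ℝ)) x -
      Set.indicator Ωl (fun _ => (1 : ℝ)) x|)
    (f := fun _ => (0 : ℝ)) (bound := fun _ => (2 : ℝ))
    (fun n => ((((measurable_const (a := (1:ℝ))).indicator
        (hopen n).measurableSet).sub
        (measurable_const.indicator hlopen.measurableSet)).abs).aestronglyMeasurable)
    (integrable_const 2)
    (fun n => Filter.Eventually.of_forall fun x => by
      rw [Real.norm_eq_abs, abs_abs]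
      have h1 : |Set.indicator (Ω n) (fun _ => (1 : ℝ)) x| ≤ 1 := by
        by_cases h : x ∈ Ω n <;> simp [h]
      have h2 : |Set.indicator Ωl (fun _ => (1 : ℝ)) x| ≤ 1 := by
        by_cases h : x ∈ Ωl <;> simp [h]
      calc |Set.indicator (Ω n) (fun _ => (1 : ℝ)) x -
          Set.indicator Ωl (fun _ => (1 : ℝ)) x|
          ≤ _ + _ := abs_sub _ _
        _ ≤ 1 + 1 := add_le_add h1 h2
        _ = 2 := by norm_num)
    hptwise
  simpa using key
end

section
/- Let D be a bounded open ball in ℝ^N and let Ω_n (n ∈ ℕ) and Ω be nonempty open subsets of D such that: Ω_n converges to Ω in the sense of compact sets; Ω satisfies the Caratheodory property int(cl(Ω)) = Ω; and there is a nonempty compact set K ⊆ cl(D) such that the Hausdorff distance between cl(Ω_n) and K tends to 0 as n → ∞. Then K = cl(Ω). -/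
open Metric Filter Topology

/-!
Compact convergence alone pins down the Hausdorff limit `K`: a point of `Ω` lies in `Ωₙ` for
large `n`, hence within any `ε` of `K`, so `Ω ⊆ K`; a point of `K` outside `cl(Ω)` has a closed
ball around it missing `cl(Ωₙ)` for large `n`, which contradicts `cl(Ωₙ)` being Hausdorff close
to `K`.
-/

section HausdorffLimit

variable {α ι : Type*} [PseudoMetricSpace α] {s : ι → Set α} {t : Set α} {l : Filter ι}

theorem mem_closure_of_frequently_mem_of_tendsto_hausdorffDist
    (hfin : ∀ i, hausdorffEDist (s i) t ≠ ⊤)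
    (hH : Tendsto (fun i => hausdorffDist (s i) t) l (𝓝 0)) {x : α}
    (hx : ∃ᶠ i in l, x ∈ s i) : x ∈ closure t := by
  refine Metric.mem_closure_iff.2 fun ε hε => ?_
  obtain ⟨i, hxi, hi⟩ := (hx.and_eventually (hH.eventually (eventually_lt_nhds hε))).exists
  exact exists_dist_lt_of_hausdorffDist_lt hxi hi (hfin i)

theorem eventually_exists_dist_lt_of_tendsto_hausdorffDist
    (hfin : ∀ i, hausdorffEDist (s i) t ≠ ⊤)
    (hH : Tendsto (fun i => hausdorffDist (s i) t) l (𝓝 0)) {x : α} (hx : x ∈ t)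
    {ε : ℝ} (hε : 0 < ε) : ∀ᶠ i in l, ∃ y ∈ s i, dist y x < ε :=
  (hH.eventually (eventually_lt_nhds hε)).mono fun i hi =>
    exists_dist_lt_of_hausdorffDist_lt' hx hi (hfin i)

end HausdorffLimit

namespace KConv

variable {N : ℕ} {Ω : ℕ → Set (EuclideanSpace ℝ (Fin N))} {Ωl : Set (EuclideanSpace ℝ (Fin N))}
  {x : EuclideanSpace ℝ (Fin N)}

theorem eventually_mem (h : KConv Ω Ωl) (hx : x ∈ Ωl) : ∀ᶠ n in atTop, x ∈ Ω n := by
  obtain ⟨N₀, hN₀⟩ := h.1 {x} isCompact_singleton (Set.singleton_subset_iff.2 hx)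
  exact eventually_atTop.2 ⟨N₀, fun n hn => hN₀ n hn rfl⟩

theorem exists_eventually_closedBall_subset_compl (h : KConv Ω Ωl) (hx : x ∉ closure Ωl) :
    ∃ r > 0, ∀ᶠ n in atTop, closedBall x r ⊆ (closure (Ω n))ᶜ := by
  obtain ⟨r, hr, hball⟩ :=
    nhds_basis_closedBall.mem_iff.1 (isClosed_closure.isOpen_compl.mem_nhds hx)
  obtain ⟨N₀, hN₀⟩ := h.2 (closedBall x r) (isCompact_closedBall x r) hball
  exact ⟨r, hr, eventually_atTop.2 ⟨N₀, hN₀⟩⟩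

end KConv

theorem stmt_6_general {N : ℕ} (x₀ : EuclideanSpace ℝ (Fin N)) (R : ℝ)
    (D : Set (EuclideanSpace ℝ (Fin N))) (hD : D = ball x₀ R)
    (Ω : ℕ → Set (EuclideanSpace ℝ (Fin N))) (Ωl : Set (EuclideanSpace ℝ (Fin N)))
    (hsub : ∀ n, Ω n ⊆ D) (hne : ∀ n, (Ω n).Nonempty)
    (hKconv : KConv Ω Ωl)
    (K : Set (EuclideanSpace ℝ (Fin N)))
    (hKc : IsCompact K) (hKne : K.Nonempty)
    (hH : Tendsto (fun n => hausdorffDist (closure (Ω n)) K) atTop (nhds 0)) :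
    K = closure Ωl := by
  have hfin : ∀ n, hausdorffEDist (closure (Ω n)) K ≠ ⊤ := fun n =>
    hausdorffEDist_ne_top_of_nonempty_of_bounded (hne n).closure hKne
      ((hD ▸ isBounded_ball).subset (hsub n)).closure hKc.isBounded
  refine Set.Subset.antisymm (fun x hx => ?_) (closure_minimal (fun x hx => ?_) hKc.isClosed)
  · by_contra hxΩ
    obtain ⟨r, hr, hfar⟩ := hKconv.exists_eventually_closedBall_subset_compl hxΩ
    obtain ⟨n, hball, y, hy, hyx⟩ :=
      (hfar.and (eventually_exists_dist_lt_of_tendsto_hausdorffDist hfin hH hx hr)).exists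
    exact hball (mem_closedBall.2 hyx.le) hy
  · rw [← hKc.isClosed.closure_eq]
    exact mem_closure_of_frequently_mem_of_tendsto_hausdorffDist hfin hH
      ((hKconv.eventually_mem hx).mono fun n hn => subset_closure hn).frequently

/-- Proposition 2.20 (abstract form): if `Ωₙ` converges to `Ω` in the sense of compact sets,
`Ω` is of Caratheodory type, and `cl(Ωₙ)` converges in Hausdorff distance to a nonempty
compact set `K ⊆ cl(D)`, then `K = cl(Ω)`. -/
theorem stmt_6 {N : ℕ} (x₀ : EuclideanSpace ℝ (Fin N)) (R : ℝ) (hR : 0 < R)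
    (D : Set (EuclideanSpace ℝ (Fin N))) (hD : D = ball x₀ R)
    (Ω : ℕ → Set (EuclideanSpace ℝ (Fin N))) (Ωl : Set (EuclideanSpace ℝ (Fin N)))
    (hopen : ∀ n, IsOpen (Ω n)) (hsub : ∀ n, Ω n ⊆ D) (hne : ∀ n, (Ω n).Nonempty)
    (hlopen : IsOpen Ωl) (hlsub : Ωl ⊆ D) (hlne : Ωl.Nonempty)
    (hKconv : KConv Ω Ωl)
    (hCara : interior (closure Ωl) = Ωl)
    (K : Set (EuclideanSpace ℝ (Fin N)))
    (hKc : IsCompact K) (hKne : K.Nonempty) (hKsub : K ⊆ closure D)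
    (hH : Tendsto (fun n => hausdorffDist (closure (Ω n)) K) atTop (nhds 0)) :
    K = closure Ωl :=
  stmt_6_general x₀ R D hD Ω Ωl hsub hne hKconv K hKc hKne hH
end

section
/- Let S be a subset of Euclidean space ℝ^N, and let d : S → ℝ and ν : S → ℝ^N be functions such that for some constants K, M, L ≥ 0: |d(c_1) − d(c_2)| ≤ K|c_1 − c_2| for all c_1, c_2 ∈ S; 0 ≤ d(c) ≤ M for all c ∈ S; |ν(c_1) − ν(c_2)| ≤ L|c_1 − c_2| for all c_1, c_2 ∈ S; and |ν(c)| = 1 for all c ∈ S. Assume moreover K + M·L < 1. Define Φ : S → ℝ^N by Φ(c) = c + d(c)·ν(c). Then for all c_1, c_2 ∈ S: (1 − (K + M·L))·|c_1 − c_2| ≤ |Φ(c_1) − Φ(c_2)| ≤ (1 + K + M·L)·|c_1 − c_2|; in particular Φ is bilipschitz. -/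
/-- Theorem 3.4: if `K + M·L < 1`, then `Φ(c) = c + d(c)·ν(c)` is bilipschitz, with
`(1 − (K + M·L))·|c₁ − c₂| ≤ |Φ(c₁) − Φ(c₂)| ≤ (1 + K + M·L)·|c₁ − c₂|`. -/
theorem stmt_13 {N : ℕ} (S : Set (EuclideanSpace ℝ (Fin N)))
    (d : EuclideanSpace ℝ (Fin N) → ℝ)
    (ν : EuclideanSpace ℝ (Fin N) → EuclideanSpace ℝ (Fin N))
    (K M L : ℝ) (hK : 0 ≤ K) (hM : 0 ≤ M) (hL : 0 ≤ L)
    (hd : ∀ c₁ ∈ S, ∀ c₂ ∈ S, |d c₁ - d c₂| ≤ K * ‖c₁ - c₂‖)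
    (hd0 : ∀ c ∈ S, 0 ≤ d c) (hdM : ∀ c ∈ S, d c ≤ M)
    (hν : ∀ c₁ ∈ S, ∀ c₂ ∈ S, ‖ν c₁ - ν c₂‖ ≤ L * ‖c₁ - c₂‖)
    (hνu : ∀ c ∈ S, ‖ν c‖ = 1)
    (hsmall : K + M * L < 1)
    (Φ : EuclideanSpace ℝ (Fin N) → EuclideanSpace ℝ (Fin N))
    (hΦ : ∀ c ∈ S, Φ c = c + d c • ν c) :
    ∀ c₁ ∈ S, ∀ c₂ ∈ S,
      (1 - (K + M * L)) * ‖c₁ - c₂‖ ≤ ‖Φ c₁ - Φ c₂‖ ∧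
      ‖Φ c₁ - Φ c₂‖ ≤ (1 + K + M * L) * ‖c₁ - c₂‖ := by
  intro c₁ h₁ c₂ h₂
  have key : ‖d c₁ • ν c₁ - d c₂ • ν c₂‖ ≤ (K + M * L) * ‖c₁ - c₂‖ := by
    have h1 : d c₁ • ν c₁ - d c₂ • ν c₂
        = (d c₁ - d c₂) • ν c₁ + d c₂ • (ν c₁ - ν c₂) := by
      simp [sub_smul, smul_sub]
    rw [h1]
    calc ‖(d c₁ - d c₂) • ν c₁ + d c₂ • (ν c₁ - ν c₂)‖
        ≤ ‖(d c₁ - d c₂) • ν c₁‖ + ‖d c₂ • (ν c₁ - ν c₂)‖ := norm_add_le _ _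
      _ = |d c₁ - d c₂| * ‖ν c₁‖ + |d c₂| * ‖ν c₁ - ν c₂‖ := by
          simp [norm_smul, Real.norm_eq_abs]
      _ ≤ K * ‖c₁ - c₂‖ + M * (L * ‖c₁ - c₂‖) := by
          apply add_le_add
          · rw [hνu c₁ h₁, mul_one]; exact hd c₁ h₁ c₂ h₂
          · have h2 : |d c₂| ≤ M := by
              rw [abs_of_nonneg (hd0 c₂ h₂)]; exact hdM c₂ h₂
            exact mul_le_mul h2 (hν c₁ h₁ c₂ h₂) (norm_nonneg _) hM
      _ = (K + M * L) * ‖c₁ - c₂‖ := by ring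
  have hΦdiff : Φ c₁ - Φ c₂ = (c₁ - c₂) + (d c₁ • ν c₁ - d c₂ • ν c₂) := by
    rw [hΦ c₁ h₁, hΦ c₂ h₂]; abel
  constructor
  · have hc : c₁ - c₂ = (Φ c₁ - Φ c₂) - (d c₁ • ν c₁ - d c₂ • ν c₂) := by
      rw [hΦdiff]; abel
    have h3 : ‖c₁ - c₂‖ ≤ ‖Φ c₁ - Φ c₂‖ + ‖d c₁ • ν c₁ - d c₂ • ν c₂‖ := by
      rw [hc]; exact norm_sub_le _ _
    nlinarith [norm_nonneg (c₁ - c₂)]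
  · rw [hΦdiff]
    calc ‖(c₁ - c₂) + (d c₁ • ν c₁ - d c₂ • ν c₂)‖
        ≤ ‖c₁ - c₂‖ + ‖d c₁ • ν c₁ - d c₂ • ν c₂‖ := norm_add_le _ _
      _ ≤ ‖c₁ - c₂‖ + (K + M * L) * ‖c₁ - c₂‖ := by linarith
      _ = (1 + K + M * L) * ‖c₁ - c₂‖ := by ring
end

section
/- Let D be a bounded open ball in ℝ^N, let Ω_n (n ∈ ℕ) and Ω be nonempty open subsets of D with Ω_n →H Ω, and let F ⊆ ℝ^N be a closed set such that ∂Ω_n ⊆ F for every n. Then ∂Ω ⊆ F. -/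
open Metric Filter Topology

/-- A preconnected set meeting both `t` and its complement meets the frontier of `t`. -/
lemma preconnected_inter_frontier {X : Type*} [TopologicalSpace X] {s t : Set X}
    (hs : IsPreconnected s) (h1 : (s ∩ t).Nonempty) (h2 : (s \ t).Nonempty) :
    (s ∩ frontier t).Nonempty := by
  by_contra h
  rw [Set.not_nonempty_iff_eq_empty] at h
  have hdisj : ∀ x ∈ s, x ∉ frontier t := fun x hx hxf =>
    Set.eq_empty_iff_forall_notMem.1 h x ⟨hx, hxf⟩
  have hsub : s ⊆ interior t ∪ (closure t)ᶜ := by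
    intro x hx
    by_cases hxc : x ∈ closure t
    · left
      by_contra hxi
      exact hdisj x hx ⟨hxc, hxi⟩
    · right; exact hxc
  have ha : (s ∩ interior t).Nonempty := by
    obtain ⟨x, hxs, hxt⟩ := h1
    refine ⟨x, hxs, ?_⟩
    by_contra hxi
    exact hdisj x hxs ⟨subset_closure hxt, hxi⟩
  have hb : (s ∩ (closure t)ᶜ).Nonempty := by
    obtain ⟨x, hxs, hxt⟩ := h2
    refine ⟨x, hxs, fun hxc => ?_⟩
    exact hdisj x hxs ⟨hxc, fun hxi => hxt (interior_subset hxi)⟩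
  obtain ⟨x, -, hxi, hxc⟩ :=
    hs (interior t) (closure t)ᶜ isOpen_interior isClosed_closure.isOpen_compl hsub ha hb
  exact hxc (subset_closure (interior_subset hxi))

/-- Step in the proof of Theorem 5.2: a closed constraint `∂Ωₙ ⊆ F` on the boundaries is
preserved under Hausdorff convergence. -/
theorem stmt_14 {N : ℕ} (x₀ : EuclideanSpace ℝ (Fin N)) (R : ℝ) (hR : 0 < R)
    (D : Set (EuclideanSpace ℝ (Fin N))) (hD : D = ball x₀ R)
    (Ω : ℕ → Set (EuclideanSpace ℝ (Fin N))) (Ωl : Set (EuclideanSpace ℝ (Fin N)))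
    (hopen : ∀ n, IsOpen (Ω n)) (hsub : ∀ n, Ω n ⊆ D) (hne : ∀ n, (Ω n).Nonempty)
    (hlopen : IsOpen Ωl) (hlsub : Ωl ⊆ D) (hlne : Ωl.Nonempty)
    (hH : HConv D Ω Ωl)
    (F : Set (EuclideanSpace ℝ (Fin N))) (hF : IsClosed F)
    (hbd : ∀ n, frontier (Ω n) ⊆ F) :
    frontier Ωl ⊆ F := by
  rcases Nat.eq_zero_or_pos N with h0 | hN
  · -- trivial case: the space is a single point, so `Ωl = univ` has empty frontier
    subst h0
    intro x hx
    obtain ⟨z, hz⟩ := hlne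
    have hxz : x = z := Subsingleton.elim x z
    exact absurd (by rw [hlopen.interior_eq]; exact hxz ▸ hz : x ∈ interior Ωl) hx.2
  · haveI : Nonempty (Fin N) := ⟨⟨0, hN⟩⟩
    -- a point on the sphere, lying in every `closure D \ Ω n` and in `closure D \ Ωl`
    obtain ⟨p, hp⟩ : (sphere x₀ R).Nonempty := NormedSpace.sphere_nonempty.2 hR.le
    have hclD : closure D = closedBall x₀ R := by rw [hD, closure_ball x₀ hR.ne']
    have hpD : p ∉ D := by
      rw [hD, mem_ball]
      rw [mem_sphere] at hp
      simp [hp]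
    have hpcl : p ∈ closure D := hclD ▸ sphere_subset_closedBall hp
    have hKnne : ∀ n, (closure D \ Ω n).Nonempty :=
      fun n => ⟨p, hpcl, fun hpn => hpD (hsub n hpn)⟩
    have hKne : (closure D \ Ωl).Nonempty := ⟨p, hpcl, fun hpn => hpD (hlsub hpn)⟩
    have hbdd : Bornology.IsBounded (closure D) := hclD ▸ isBounded_closedBall
    have hfin : ∀ n, EMetric.hausdorffEdist (closure D \ Ω n) (closure D \ Ωl) ≠ ⊤ :=
      fun n => hausdorffEdist_ne_top_of_nonempty_of_bounded (hKnne n) hKne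
        (hbdd.subset Set.diff_subset) (hbdd.subset Set.diff_subset)
    intro x hx
    -- x is in `closure D \ Ωl`
    have hxK : x ∈ closure D \ Ωl := by
      refine ⟨?_, fun hxl => hx.2 (by rw [hlopen.interior_eq]; exact hxl)⟩
      exact closure_mono hlsub hx.1
    -- show x ∈ closure F = F
    rw [← hF.closure_eq]
    rw [Metric.mem_closure_iff]
    intro ε hε
    have hδ : 0 < ε / 3 := by linarith
    -- pick z ∈ Ωl close to x
    obtain ⟨z, hzΩ, hxz⟩ := Metric.mem_closure_iff.1 hx.1 (ε / 3) hδ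
    -- a ball around z inside Ωl
    obtain ⟨r, hr, hball⟩ := Metric.isOpen_iff.1 hlopen z hzΩ
    set η := min (ε / 3) r with hηdef
    have hη : 0 < η := lt_min hδ hr
    -- pick n with small Hausdorff distance
    obtain ⟨n, hn⟩ := (hH.eventually (gt_mem_nhds hη)).exists
    -- z ∈ Ω n
    have hzΩn : z ∈ Ω n := by
      by_contra hzn
      have hzKn : z ∈ closure D \ Ω n := ⟨subset_closure (hlsub hzΩ), hzn⟩
      have h1 : infDist z (closure D \ Ωl) ≤
          hausdorffDist (closure D \ Ω n) (closure D \ Ωl) :=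
        infDist_le_hausdorffDist_of_mem hzKn (hfin n)
      have h2 : infDist z (closure D \ Ωl) < r :=
        lt_of_le_of_lt h1 (lt_of_lt_of_le hn (min_le_right _ _))
      obtain ⟨w, hw, hzw⟩ := (infDist_lt_iff hKne).1 h2
      exact hw.2 (hball (mem_ball'.2 hzw))
    -- pick y ∈ closure D \ Ω n close to x
    have h3 : infDist x (closure D \ Ω n) ≤
        hausdorffDist (closure D \ Ω n) (closure D \ Ωl) := by
      rw [hausdorffDist_comm]
      exact infDist_le_hausdorffDist_of_mem hxK
        (by rw [EMetric.hausdorffEdist_comm]; exact hfin n)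
    have h4 : infDist x (closure D \ Ω n) < ε / 3 :=
      lt_of_le_of_lt h3 (lt_of_lt_of_le hn (min_le_left _ _))
    obtain ⟨y, hy, hxy⟩ := (infDist_lt_iff (hKnne n)).1 h4
    -- the segment from z to y crosses the frontier of Ω n
    obtain ⟨f, hfseg, hffr⟩ := preconnected_inter_frontier
      (convex_segment z y).isPreconnected
      ⟨z, left_mem_segment ℝ z y, hzΩn⟩
      ⟨y, right_mem_segment ℝ z y, hy.2⟩
    refine ⟨f, hbd n hffr, ?_⟩
    have hseg : dist z f + dist f y = dist z y := dist_add_dist_of_mem_segment hfseg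
    have hzy : dist z y ≤ dist z x + dist x y := dist_triangle z x y
    have hxf : dist x f ≤ dist x z + dist z f := dist_triangle x z f
    have hdf : 0 ≤ dist f y := dist_nonneg
    have hzx : dist z x = dist x z := dist_comm z x
    linarith
end

section
/- Let ε be a real number with 0 < ε ≤ 1/20 and let G : ℝ → ℝ be a differentiable function such that: G(θ + 2π) = G(θ) for all θ; G(θ) ≤ 1 for all θ; G(θ_0) = 1 for some θ_0 ∈ ℝ; and G(θ)²·G′(θ)² ≤ ε²·(G(θ)² + G′(θ)²) for all θ. Then G(θ) ≥ 1 − 4ε for all θ ∈ ℝ. -/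
/-! Where `G > 1 - 4ε ≥ 4/5`, the inequality `(G G′)² ≤ ε²(G² + G′²)` forces `|G′| < 5ε/4`.
Starting from a point where `G = 1`, the fencing theorem keeps `G` above the line of slope
`-5ε/4` for as long as `G > 1 - 4ε`; by periodicity every `θ` lies within `π` of such a point,
and `5π/4 < 4`. -/

lemma four_mul_abs_lt_of_sq_mul_sq_le {g d ε : ℝ} (hε : 0 < ε) (hg : 5 * ε < 3 * g)
    (h : g ^ 2 * d ^ 2 ≤ ε ^ 2 * (g ^ 2 + d ^ 2)) : 4 * |d| < 5 * ε := by
  have hg0 : 0 < g := by linarith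
  have hgε : 25 * ε ^ 2 < 9 * g ^ 2 := by nlinarith
  have hsq : 16 * d ^ 2 < 25 * ε ^ 2 := by
    rcases eq_or_ne d 0 with rfl | hd
    · nlinarith
    · have hd2 : 0 < d ^ 2 := by positivity
      nlinarith [mul_lt_mul_of_pos_left hgε hd2]
  have h4d : (4 * |d|) ^ 2 < (5 * ε) ^ 2 := by rw [mul_pow, mul_pow, sq_abs]; linarith
  exact abs_lt_of_sq_lt_sq' h4d (by positivity) |>.2

section Fencing

variable {G : ℝ → ℝ} {m L a b : ℝ}

lemma sub_mul_le_of_abs_deriv_lt (hG : Differentiable ℝ G) (hL : 0 ≤ L)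
    (hbound : ∀ t, m < G t → |deriv G t| < L) (hab : a ≤ b) (hm : m < G a - L * (b - a)) :
    G a - L * (b - a) ≤ G b := by
  have fence := image_le_of_deriv_right_lt_deriv_boundary (f := fun x => -G x)
    (f' := fun x => -deriv G x) (B := fun x => -G a + L * (x - a)) (B' := fun _ => L)
    hG.continuous.neg.continuousOn (fun x _ => (hG x).hasDerivAt.neg.hasDerivWithinAt)
    (by simp) (fun x => by
      simpa using (((hasDerivAt_id x).sub_const a).const_mul L).const_add (-G a))
    (fun x hx hGx => by
      have hmx : m < G x := by nlinarith [hx.2]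
      linarith [neg_abs_le (deriv G x), hbound x hmx])
    ⟨hab, le_rfl⟩
  linarith

lemma sub_mul_abs_le_of_abs_deriv_lt (hG : Differentiable ℝ G) (hL : 0 ≤ L)
    (hbound : ∀ t, m < G t → |deriv G t| < L) (hm : m < G a - L * |b - a|) :
    G a - L * |b - a| ≤ G b := by
  rcases le_total a b with hab | hba
  · rw [abs_of_nonneg (sub_nonneg.2 hab)] at hm ⊢
    exact sub_mul_le_of_abs_deriv_lt hG hL hbound hab hm
  · rw [abs_of_nonpos (sub_nonpos.2 hba)] at hm ⊢
    have hbound' : ∀ t, m < G (-t) → |deriv (fun x => G (-x)) t| < L := fun t ht => by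
      rw [deriv_comp_neg, abs_neg]; exact hbound _ ht
    have hm' : m < G (-(-a)) - L * (-b - -a) := by
      simpa only [neg_neg, neg_sub_neg, neg_sub] using hm
    simpa only [neg_neg, neg_sub_neg, neg_sub] using sub_mul_le_of_abs_deriv_lt
      (G := fun x => G (-x)) (hG.comp differentiable_neg) hL hbound' (neg_le_neg hba) hm'

end Fencing

theorem stmt_15_general (ε : ℝ) (hε0 : 0 < ε) (hε : ε ≤ 1 / 20)
    (G : ℝ → ℝ) (hG : Differentiable ℝ G)
    (hper : ∀ θ : ℝ, G (θ + 2 * Real.pi) = G θ)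
    (htouch : ∃ θ₀ : ℝ, G θ₀ = 1)
    (hgnp : ∀ θ : ℝ, (G θ) ^ 2 * (deriv G θ) ^ 2 ≤ ε ^ 2 * ((G θ) ^ 2 + (deriv G θ) ^ 2)) :
    ∀ θ : ℝ, 1 - 4 * ε ≤ G θ := by
  intro θ
  obtain ⟨θ₀, hθ₀⟩ := htouch
  obtain ⟨a, ⟨hθa, haθ⟩, hGa⟩ :=
    Function.Periodic.exists_mem_Ico hper (by positivity) θ₀ (θ - Real.pi)
  have hdist : |θ - a| ≤ Real.pi := abs_le.2 ⟨by linarith, by linarith⟩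
  have hbound : ∀ t, 1 - 4 * ε < G t → |deriv G t| < 5 / 4 * ε := fun t ht => by
    linarith [four_mul_abs_lt_of_sq_mul_sq_le hε0 (by linarith) (hgnp t)]
  have hslope : 5 / 4 * ε * |θ - a| < 4 * ε := by nlinarith [Real.pi_lt_d2]
  have hfence := sub_mul_abs_le_of_abs_deriv_lt (b := θ) hG (by positivity) hbound
    (by rw [← hGa, hθ₀]; linarith)
  rw [← hGa, hθ₀] at hfence
  linarith

/-- Analytic core of Lemma 2.7: a 2π-periodic differentiable radial graph function `G ≤ 1`
touching 1 and satisfying `(G G′)² ≤ ε²(G² + G′²)` verifies `G ≥ 1 − 4ε`. -/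
theorem stmt_15 (ε : ℝ) (hε0 : 0 < ε) (hε : ε ≤ 1 / 20)
    (G : ℝ → ℝ) (hG : Differentiable ℝ G)
    (hper : ∀ θ : ℝ, G (θ + 2 * Real.pi) = G θ)
    (hle : ∀ θ : ℝ, G θ ≤ 1)
    (htouch : ∃ θ₀ : ℝ, G θ₀ = 1)
    (hgnp : ∀ θ : ℝ, (G θ) ^ 2 * (deriv G θ) ^ 2 ≤ ε ^ 2 * ((G θ) ^ 2 + (deriv G θ) ^ 2)) :
    ∀ θ : ℝ, 1 - 4 * ε ≤ G θ :=
  stmt_15_general ε hε0 hε G hG hper htouch hgnp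
end
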